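/- Let f: ℝ^p → ℝ be L_f-smooth with moduli σ_f, σ_{−f} ∈ [−L_f, L_f] such that f − (σ_f/2)‖·‖² and −f − (σ_{−f}/2)‖·‖² are convex, let g: ℝ^p → ℝ ∪ {∞} be proper, convex and lsc, and let 0 < γ < 1/L_f. Then the DC envelope φ_γ = g^γ − (−f)^γ is differentiable and for all s, s′ ∈ ℝ^p one has (σ_f/(1 − γσ_f))‖s − s′‖² ≤ ⟨∇φ_γ(s) − ∇φ_γ(s′), s − s′⟩ ≤ (1/(γ(1 + γσ_{−f})))‖s − s′‖². -/

import Mathlib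

/-!
An envelope `M s = F (x s) + ‖x s - s‖² / (2γ)` that at every `b` lies below
`F (x a) + ‖x a - b‖² / (2γ)` satisfies a one-sided quadratic bound around the candidate gradient
`γ⁻¹ (s - x s)`; when `x` is continuous this already forces differentiability. Both `g^γ` and
`(-f)^γ` are of this form, so `∇φ_γ = γ⁻¹ (prox_{-γf} - prox_{γg})`.

For the bounds write `Δs = s - s'`. The prox of the convex `g` is firmly nonexpansive, so
`0 ≤ ⟪Δ prox_{γg}, Δs⟫ ≤ ‖Δs‖²`. The prox `u` of `-f` solves `u = s + γ ∇f(u)`. Hypoconvexity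
of `-f` gives `(1 + γσ_{-f}) ‖Δu‖² ≤ ⟪Δu, Δs⟫`, hence `⟪Δu, Δs⟫ ≤ ‖Δs‖² / (1 + γσ_{-f})`, while
cocoercivity of `∇f - σ_f id` (Baillon–Haddad, with constant `γ⁻¹ - σ_f` since `L_f ≤ γ⁻¹`) gives
`‖Δs‖² / (1 - γσ_f) ≤ ⟪Δu, Δs⟫`. Subtracting and dividing by `γ` yields the two bounds.
-/

open scoped InnerProductSpace
noncomputable section

/-- `ℝ^p` as a Euclidean space. -/
abbrev Euc (p : ℕ) := EuclideanSpace ℝ (Fin p)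

variable {p : ℕ}

/-- `f : ℝ^p → ℝ ∪ {∞}` (modelled with `EReal` values never equal to `-∞`) is proper. -/
def ProperFun (f : Euc p → EReal) : Prop :=
  (∀ x, f x ≠ ⊥) ∧ (∃ x, f x ≠ ⊤)

/-- Convexity for extended-real-valued functions. -/
def ConvexFun (f : Euc p → EReal) : Prop :=
  ∀ x y : Euc p, ∀ t : ℝ, 0 ≤ t → t ≤ 1 →
    f (t • x + (1 - t) • y) ≤ (t : EReal) * f x + ((1 - t : ℝ) : EReal) * f y

/-- The Moreau envelope `f^γ(x) = inf_w { f(w) + (1/(2γ))‖w − x‖² }`, as an extended real. -/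
def moreau (f : Euc p → EReal) (γ : ℝ) (x : Euc p) : EReal :=
  ⨅ w : Euc p, f w + ((1/(2*γ) * ‖w - x‖^2 : ℝ) : EReal)

/-- The (real-valued) Moreau envelope. -/
def moreauR (f : Euc p → EReal) (γ : ℝ) (x : Euc p) : ℝ := (moreau f γ x).toReal

/-- `u` minimizes `w ↦ f(w) + (1/(2γ))‖w − x‖²`. -/
def ProxObjMin (f : Euc p → EReal) (γ : ℝ) (x u : Euc p) : Prop :=
  ∀ w, f u + ((1/(2*γ) * ‖u - x‖^2 : ℝ) : EReal) ≤ f w + ((1/(2*γ) * ‖w - x‖^2 : ℝ) : EReal)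

/-- `u = prox_{γf}(x)`: `u` is the unique minimizer of `w ↦ f(w) + (1/(2γ))‖w − x‖²`. -/
def IsProxOf (f : Euc p → EReal) (γ : ℝ) (x u : Euc p) : Prop :=
  ProxObjMin f γ x u ∧ ∀ w, ProxObjMin f γ x w → w = u

/-- `u` minimizes `w ↦ −f(w) + (1/(2γ))‖w − s‖²` (for real-valued `f`). -/
def NegProxObjMin (f : Euc p → ℝ) (γ : ℝ) (s u : Euc p) : Prop :=
  ∀ w, -f u + 1/(2*γ) * ‖u - s‖^2 ≤ -f w + 1/(2*γ) * ‖w - s‖^2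

open Filter Topology Set

section InnerBounds

variable {F : Type*} [NormedAddCommGroup F] [InnerProductSpace ℝ F] {u v : F} {c : ℝ}

theorem mul_norm_le_of_mul_norm_sq_le_inner (h : c * ‖u‖ ^ 2 ≤ ⟪u, v⟫_ℝ) : c * ‖u‖ ≤ ‖v‖ := by
  rcases (norm_nonneg u).eq_or_lt with hu | hu
  · rw [← hu, mul_zero]; exact norm_nonneg v
  · have := h.trans (real_inner_le_norm u v)
    rw [sq, ← mul_assoc, mul_comm ‖u‖ ‖v‖] at this
    exact le_of_mul_le_mul_right this hu

theorem inner_le_div_of_mul_norm_sq_le_inner (hc : 0 < c) (h : c * ‖u‖ ^ 2 ≤ ⟪u, v⟫_ℝ) :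
    ⟪u, v⟫_ℝ ≤ ‖v‖ ^ 2 / c := by
  rw [le_div_iff₀ hc]
  calc ⟪u, v⟫_ℝ * c ≤ ‖u‖ * ‖v‖ * c := by gcongr; exact real_inner_le_norm u v
    _ = c * ‖u‖ * ‖v‖ := by ring
    _ ≤ ‖v‖ * ‖v‖ := by gcongr; exact mul_norm_le_of_mul_norm_sq_le_inner h
    _ = ‖v‖ ^ 2 := by ring

theorem sub_eq_sub_sub_smul_of_eq_add_smul {w u : F → F} (hu : ∀ s, u s = s + c • w (u s))
    (s s' : F) : s - s' = (u s - u s') - c • (w (u s) - w (u s')) := by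
  linear_combination (norm := module) hu s' - hu s

end InnerBounds

section GradientCalculus

variable {E : Type*} [NormedAddCommGroup E] [InnerProductSpace ℝ E] [CompleteSpace E]
  {φ ψ : E → ℝ} {φ' ψ' x : E}

theorem HasGradientAt.add (hφ : HasGradientAt φ φ' x) (hψ : HasGradientAt ψ ψ' x) :
    HasGradientAt (fun z => φ z + ψ z) (φ' + ψ') x := by
  rw [hasGradientAt_iff_hasFDerivAt, map_add]
  exact hφ.hasFDerivAt.add hψ.hasFDerivAt

theorem HasGradientAt.neg (hφ : HasGradientAt φ φ' x) : HasGradientAt (fun z => -φ z) (-φ') x := by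
  rw [hasGradientAt_iff_hasFDerivAt, map_neg]
  exact hφ.hasFDerivAt.neg

theorem HasGradientAt.sub (hφ : HasGradientAt φ φ' x) (hψ : HasGradientAt ψ ψ' x) :
    HasGradientAt (fun z => φ z - ψ z) (φ' - ψ') x := by
  rw [hasGradientAt_iff_hasFDerivAt, map_sub]
  exact hφ.hasFDerivAt.sub hψ.hasFDerivAt

theorem HasGradientAt.const_mul (c : ℝ) (hφ : HasGradientAt φ φ' x) :
    HasGradientAt (fun z => c * φ z) (c • φ') x := by
  rw [hasGradientAt_iff_hasFDerivAt, map_smul]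
  exact hφ.hasFDerivAt.const_mul c

theorem hasGradientAt_norm_sub_sq (s x : E) :
    HasGradientAt (fun w => ‖w - s‖ ^ 2) ((2 : ℝ) • (x - s)) x := by
  rw [hasGradientAt_iff_hasFDerivAt]
  refine ((hasFDerivAt_id x).sub_const s).norm_sq.congr_fderiv ?_
  ext v
  simp

theorem hasGradientAt_half_mul_norm_sq (c : ℝ) (x : E) :
    HasGradientAt (fun w => c / 2 * ‖w‖ ^ 2) (c • x) x := by
  convert (hasGradientAt_norm_sub_sq 0 x).const_mul (c / 2) using 1
  · simp
  · rw [smul_smul, sub_zero, div_mul_cancel₀ c two_ne_zero]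

theorem HasGradientAt.hasDerivAt_lineMap {a b : E} {t : ℝ}
    (hφ : HasGradientAt φ φ' (AffineMap.lineMap a b t)) :
    HasDerivAt (fun t => φ (AffineMap.lineMap a b t)) ⟪φ', b - a⟫_ℝ t :=
  hφ.hasFDerivAt.comp_hasDerivAt t AffineMap.hasDerivAt_lineMap

end GradientCalculus

section ConvexSmooth

variable {E : Type*} [NormedAddCommGroup E] [InnerProductSpace ℝ E] [CompleteSpace E]
  {φ : E → ℝ} {φ' : E → E} {L : ℝ}

theorem ConvexOn.add_inner_le_of_hasGradientAt {v x : E} (hφ : ConvexOn ℝ univ φ)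
    (hv : HasGradientAt φ v x) (y : E) : φ x + ⟪v, y - x⟫_ℝ ≤ φ y := by
  have hline : ConvexOn ℝ univ (φ ∘ AffineMap.lineMap (k := ℝ) x y) := by
    simpa using hφ.comp_affineMap (AffineMap.lineMap (k := ℝ) x y)
  have hderiv : HasDerivAt (φ ∘ AffineMap.lineMap (k := ℝ) x y) ⟪v, y - x⟫_ℝ 0 :=
    HasGradientAt.hasDerivAt_lineMap (by simpa using hv)
  have := hline.le_slope_of_hasDerivAt (mem_univ 0) (mem_univ 1) zero_lt_one hderiv
  rw [slope_def_field] at this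
  simp only [Function.comp_apply, AffineMap.lineMap_apply_zero, AffineMap.lineMap_apply_one,
    sub_zero, div_one] at this
  linarith

theorem ConvexOn.inner_sub_nonneg_of_hasGradientAt (hφ : ConvexOn ℝ univ φ)
    (hφ' : ∀ x, HasGradientAt φ (φ' x) x) (x y : E) : 0 ≤ ⟪φ' x - φ' y, x - y⟫_ℝ := by
  have hxy := hφ.add_inner_le_of_hasGradientAt (hφ' x) y
  have hyx := hφ.add_inner_le_of_hasGradientAt (hφ' y) x
  rw [← neg_sub x y, inner_neg_right] at hxy
  rw [inner_sub_left]
  linarith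

theorem convexOn_univ_of_inner_sub_nonneg (hφ' : ∀ x, HasGradientAt φ (φ' x) x)
    (hmono : ∀ x y, 0 ≤ ⟪φ' x - φ' y, x - y⟫_ℝ) : ConvexOn ℝ univ φ := by
  refine ⟨convex_univ, fun x _ y _ a b ha hb hab => ?_⟩
  set q : ℝ → ℝ := fun t => φ (AffineMap.lineMap y x t)
  have hq : ∀ t, HasDerivAt q ⟪φ' (AffineMap.lineMap y x t), x - y⟫_ℝ t :=
    fun t => (hφ' _).hasDerivAt_lineMap
  have hq_mono : Monotone (deriv q) := by
    intro s t hst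
    rw [(hq s).deriv, (hq t).deriv, ← sub_nonneg, ← inner_sub_left]
    rcases hst.eq_or_lt with rfl | hlt
    · simp
    have h := hmono (AffineMap.lineMap y x t) (AffineMap.lineMap y x s)
    rw [AffineMap.lineMap_apply_module', AffineMap.lineMap_apply_module',
      add_sub_add_right_eq_sub, ← sub_smul, inner_smul_right] at h
    exact nonneg_of_mul_nonneg_right h (sub_pos.2 hlt)
  have hq_conv : ConvexOn ℝ univ q :=
    hq_mono.convexOn_univ_of_deriv fun t => (hq t).differentiableAt
  have := hq_conv.2 (mem_univ 0) (mem_univ 1) hb ha (by linarith)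
  obtain rfl : b = 1 - a := by linarith
  simpa [q, AffineMap.lineMap_apply_module, add_comm] using this

theorem convexOn_univ_sub_half_mul_norm_sq_iff {σ : ℝ} (hφ' : ∀ x, HasGradientAt φ (φ' x) x) :
    ConvexOn ℝ univ (fun x => φ x - σ / 2 * ‖x‖ ^ 2) ↔
      ∀ x y, σ * ‖x - y‖ ^ 2 ≤ ⟪φ' x - φ' y, x - y⟫_ℝ := by
  have hgrad x : HasGradientAt (fun x => φ x - σ / 2 * ‖x‖ ^ 2) (φ' x - σ • x) x :=
    (hφ' x).sub (hasGradientAt_half_mul_norm_sq σ x)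
  have hshift x y : ⟪(φ' x - σ • x) - (φ' y - σ • y), x - y⟫_ℝ
      = ⟪φ' x - φ' y, x - y⟫_ℝ - σ * ‖x - y‖ ^ 2 := by
    rw [sub_sub_sub_comm, ← smul_sub, inner_sub_left, real_inner_smul_left,
      real_inner_self_eq_norm_sq]
  refine ⟨fun h x y => ?_, fun h => convexOn_univ_of_inner_sub_nonneg hgrad fun x y => ?_⟩
  · have := h.inner_sub_nonneg_of_hasGradientAt hgrad x y
    rw [hshift] at this
    linarith
  · rw [hshift]
    linarith [h x y]

theorem le_add_inner_add_half_mul_norm_sq (hφ' : ∀ x, HasGradientAt φ (φ' x) x)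
    (hconv : ConvexOn ℝ univ (fun x => L / 2 * ‖x‖ ^ 2 - φ x)) (x y : E) :
    φ y ≤ φ x + ⟪φ' x, y - x⟫_ℝ + L / 2 * ‖y - x‖ ^ 2 := by
  have h := hconv.add_inner_le_of_hasGradientAt
    ((hasGradientAt_half_mul_norm_sq L x).sub (hφ' x)) y
  have hy : ‖y‖ ^ 2 = ‖x‖ ^ 2 + 2 * ⟪x, y - x⟫_ℝ + ‖y - x‖ ^ 2 := by
    rw [← norm_add_sq_real, add_sub_cancel]
  rw [inner_sub_left, real_inner_smul_left, hy] at h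
  linarith

theorem ConvexOn.add_inner_add_norm_sq_le (hL : 0 < L) (hφ : ConvexOn ℝ univ φ)
    (hφ' : ∀ x, HasGradientAt φ (φ' x) x)
    (hconv : ConvexOn ℝ univ (fun x => L / 2 * ‖x‖ ^ 2 - φ x)) (x y : E) :
    φ x + ⟪φ' x, y - x⟫_ℝ + L⁻¹ / 2 * ‖φ' y - φ' x‖ ^ 2 ≤ φ y := by
  set e := φ' y - φ' x
  set z := y - L⁻¹ • e
  have hlower := hφ.add_inner_le_of_hasGradientAt (hφ' x) z
  have hupper := le_add_inner_add_half_mul_norm_sq hφ' hconv y z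
  have hzx : z - x = (y - x) - L⁻¹ • e := by module
  have hzy : z - y = -(L⁻¹ • e) := by module
  rw [hzx, inner_sub_right, inner_smul_right] at hlower
  rw [hzy, inner_neg_right, inner_smul_right, norm_neg, norm_smul, mul_pow,
    Real.norm_of_nonneg (inv_nonneg.2 hL.le)] at hupper
  have he : L⁻¹ * ⟪φ' y, e⟫_ℝ - L⁻¹ * ⟪φ' x, e⟫_ℝ = L⁻¹ * ‖e‖ ^ 2 := by
    rw [← mul_sub, ← inner_sub_left, real_inner_self_eq_norm_sq]
  have hL2 : L / 2 * (L⁻¹ ^ 2 * ‖e‖ ^ 2) = L⁻¹ / 2 * ‖e‖ ^ 2 := by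
    field_simp
  linarith

theorem ConvexOn.norm_sub_sq_le_mul_inner (hL : 0 < L) (hφ : ConvexOn ℝ univ φ)
    (hφ' : ∀ x, HasGradientAt φ (φ' x) x)
    (hconv : ConvexOn ℝ univ (fun x => L / 2 * ‖x‖ ^ 2 - φ x)) (x y : E) :
    ‖φ' x - φ' y‖ ^ 2 ≤ L * ⟪φ' x - φ' y, x - y⟫_ℝ := by
  have hxy := hφ.add_inner_add_norm_sq_le hL hφ' hconv x y
  have hyx := hφ.add_inner_add_norm_sq_le hL hφ' hconv y x
  rw [← norm_neg, neg_sub, ← neg_sub x y, inner_neg_right] at hxy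
  have : L⁻¹ * ‖φ' x - φ' y‖ ^ 2 ≤ ⟪φ' x - φ' y, x - y⟫_ℝ := by
    rw [inner_sub_left]; linarith
  rwa [inv_mul_le_iff₀ hL] at this

theorem LipschitzWith.convexOn_half_mul_norm_sq_sub {K : NNReal} {c : ℝ}
    (hlip : LipschitzWith K φ') (hφ' : ∀ x, HasGradientAt φ (φ' x) x) (hc : (K : ℝ) ≤ c) :
    ConvexOn ℝ univ (fun x => c / 2 * ‖x‖ ^ 2 - φ x) := by
  refine convexOn_univ_of_inner_sub_nonneg
    (fun x => (hasGradientAt_half_mul_norm_sq c x).sub (hφ' x)) fun x y => ?_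
  have hinner : ⟪φ' x - φ' y, x - y⟫_ℝ ≤ K * ‖x - y‖ ^ 2 :=
    calc ⟪φ' x - φ' y, x - y⟫_ℝ ≤ ‖φ' x - φ' y‖ * ‖x - y‖ := real_inner_le_norm _ _
      _ ≤ K * ‖x - y‖ * ‖x - y‖ := by gcongr; exact hlip.norm_sub_le x y
      _ = K * ‖x - y‖ ^ 2 := by ring
  rw [sub_sub_sub_comm, ← smul_sub, inner_sub_left, real_inner_smul_left,
    real_inner_self_eq_norm_sq]
  nlinarith [sq_nonneg ‖x - y‖]

end ConvexSmooth

section Differentiability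

variable {E : Type*} [NormedAddCommGroup E] [InnerProductSpace ℝ E] [CompleteSpace E]

theorem hasGradientAt_of_sub_le_inner_add_mul_norm_sq {m : E → ℝ} {v : E → E} {C : ℝ} {s : E}
    (hv : ContinuousAt v s) (hm : ∀ a b, m b - m a ≤ ⟪v a, b - a⟫_ℝ + C * ‖b - a‖ ^ 2) :
    HasGradientAt m (v s) s := by
  have hbound b : |m b - m s - ⟪v s, b - s⟫_ℝ| ≤ (‖v b - v s‖ + C * ‖b - s‖) * ‖b - s‖ := by
    have hsb := hm b s
    rw [← neg_sub b s, inner_neg_right, norm_neg] at hsb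
    have hcs : -(‖v b - v s‖ * ‖b - s‖) ≤ ⟪v b - v s, b - s⟫_ℝ :=
      neg_le_of_abs_le (abs_real_inner_le_norm _ _)
    rw [inner_sub_left] at hcs
    have hsq : C * ‖b - s‖ ^ 2 = C * ‖b - s‖ * ‖b - s‖ := by ring
    have hnn : 0 ≤ ‖v b - v s‖ * ‖b - s‖ := by positivity
    rw [abs_le]
    constructor <;> nlinarith [hm s b]
  have hsmall : Tendsto (fun b => ‖v b - v s‖ + C * ‖b - s‖) (𝓝 s) (𝓝 0) := by
    have h1 := tendsto_iff_norm_sub_tendsto_zero.1 hv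
    have h2 := (tendsto_iff_norm_sub_tendsto_zero.1 (tendsto_id (x := 𝓝 s))).const_mul C
    simpa using h1.add h2
  rw [hasGradientAt_iff_isLittleO, Asymptotics.isLittleO_iff]
  intro ε hε
  filter_upwards [hsmall.eventually (Iic_mem_nhds hε)] with b hb
  calc ‖m b - m s - ⟪v s, b - s⟫_ℝ‖ ≤ (‖v b - v s‖ + C * ‖b - s‖) * ‖b - s‖ := hbound b
    _ ≤ ε * ‖b - s‖ := by gcongr

theorem hasGradientAt_of_forall_le_add_norm_sub_sq {F M : E → ℝ} {x : E → E} {γ : ℝ}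
    {s : E} (hx : ContinuousAt x s) (hM : ∀ a, M a = F (x a) + 1 / (2 * γ) * ‖x a - a‖ ^ 2)
    (hle : ∀ a b, M b ≤ F (x a) + 1 / (2 * γ) * ‖x a - b‖ ^ 2) :
    HasGradientAt M (γ⁻¹ • (s - x s)) s := by
  refine hasGradientAt_of_sub_le_inner_add_mul_norm_sq (v := fun a => γ⁻¹ • (a - x a))
    (C := 1 / (2 * γ)) (by fun_prop) fun a b => ?_
  have hsq : ‖x a - b‖ ^ 2 = ‖x a - a‖ ^ 2 - 2 * ⟪x a - a, b - a⟫_ℝ + ‖b - a‖ ^ 2 := by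
    rw [← norm_sub_sq_real, sub_sub_sub_cancel_right]
  have hinner : ⟪γ⁻¹ • (a - x a), b - a⟫_ℝ = -(1 / (2 * γ) * (2 * ⟪x a - a, b - a⟫_ℝ)) := by
    rw [real_inner_smul_left, ← neg_sub, inner_neg_left]; ring
  have hab := hle a b
  rw [hsq] at hab
  rw [hinner, hM a]
  linarith

end Differentiability

section Resolvent

variable {E : Type*} [NormedAddCommGroup E] [InnerProductSpace ℝ E] [CompleteSpace E]
  {f : E → ℝ} {f' u : E → E} {σ γ : ℝ}

theorem mul_norm_sq_le_inner_of_eq_add_smul_gradient (hf : ∀ x, HasGradientAt f (f' x) x)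
    (hγ : 0 ≤ γ) (hconv : ConvexOn ℝ univ (fun x => -f x - σ / 2 * ‖x‖ ^ 2))
    (hu : ∀ s, u s = s + γ • f' (u s)) (s s' : E) :
    (1 + γ * σ) * ‖u s - u s'‖ ^ 2 ≤ ⟪u s - u s', s - s'⟫_ℝ := by
  have hmono := (convexOn_univ_sub_half_mul_norm_sq_iff fun x => (hf x).neg).1 hconv (u s) (u s')
  rw [← neg_sub', inner_neg_left] at hmono
  rw [sub_eq_sub_sub_smul_of_eq_add_smul hu s s', inner_sub_right, real_inner_self_eq_norm_sq,
    inner_smul_right, real_inner_comm]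
  nlinarith [mul_le_mul_of_nonneg_left hmono hγ]

theorem lipschitzWith_of_eq_add_smul_gradient (hf : ∀ x, HasGradientAt f (f' x) x)
    (hγ : 0 ≤ γ) (hγσ : 0 < 1 + γ * σ) (hconv : ConvexOn ℝ univ (fun x => -f x - σ / 2 * ‖x‖ ^ 2))
    (hu : ∀ s, u s = s + γ • f' (u s)) : LipschitzWith (Real.toNNReal (1 + γ * σ)⁻¹) u :=
  LipschitzWith.of_dist_le' fun s s' => by
    rw [dist_eq_norm, dist_eq_norm, inv_mul_eq_div, le_div_iff₀' hγσ]
    exact mul_norm_le_of_mul_norm_sq_le_inner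
      (mul_norm_sq_le_inner_of_eq_add_smul_gradient hf hγ hconv hu s s')

theorem inner_le_div_of_eq_add_smul_gradient (hf : ∀ x, HasGradientAt f (f' x) x)
    (hγ : 0 ≤ γ) (hγσ : 0 < 1 + γ * σ) (hconv : ConvexOn ℝ univ (fun x => -f x - σ / 2 * ‖x‖ ^ 2))
    (hu : ∀ s, u s = s + γ • f' (u s)) (s s' : E) :
    ⟪u s - u s', s - s'⟫_ℝ ≤ ‖s - s'‖ ^ 2 / (1 + γ * σ) :=
  inner_le_div_of_mul_norm_sq_le_inner hγσ
    (mul_norm_sq_le_inner_of_eq_add_smul_gradient hf hγ hconv hu s s')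

theorem div_le_inner_of_eq_add_smul_gradient (hf : ∀ x, HasGradientAt f (f' x) x)
    (hγ : 0 < γ) (hγσ : γ * σ < 1) (hconv : ConvexOn ℝ univ (fun x => f x - σ / 2 * ‖x‖ ^ 2))
    (hsmooth : ConvexOn ℝ univ (fun x => γ⁻¹ / 2 * ‖x‖ ^ 2 - f x))
    (hu : ∀ s, u s = s + γ • f' (u s)) (s s' : E) :
    ‖s - s'‖ ^ 2 / (1 - γ * σ) ≤ ⟪u s - u s', s - s'⟫_ℝ := by
  have hL : 0 < γ⁻¹ - σ := by
    rw [sub_pos, ← one_div, lt_div_iff₀' hγ]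
    exact hγσ
  have hsmooth' : ConvexOn ℝ univ
      (fun x => (γ⁻¹ - σ) / 2 * ‖x‖ ^ 2 - (f x - σ / 2 * ‖x‖ ^ 2)) := by
    convert hsmooth using 2; ring
  have hcoco := hconv.norm_sub_sq_le_mul_inner hL
    (fun x => (hf x).sub (hasGradientAt_half_mul_norm_sq σ x)) hsmooth' (u s) (u s')
  have he : f' (u s) - σ • u s - (f' (u s') - σ • u s')
      = (f' (u s) - f' (u s')) - σ • (u s - u s') := by module
  rw [he] at hcoco
  rw [div_le_iff₀ (by linarith), sub_eq_sub_sub_smul_of_eq_add_smul hu s s']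
  generalize u s - u s' = d at hcoco ⊢
  generalize f' (u s) - f' (u s') = e at hcoco ⊢
  simp only [norm_sub_sq_real, inner_sub_left, inner_sub_right, real_inner_smul_left,
    real_inner_smul_right, norm_smul, mul_pow, Real.norm_eq_abs, sq_abs,
    real_inner_self_eq_norm_sq, real_inner_comm d e] at hcoco ⊢
  have hγ2 := mul_le_mul_of_nonneg_left hcoco (sq_nonneg γ)
  have hγL : γ ^ 2 * ((γ⁻¹ - σ) * (⟪d, e⟫_ℝ - σ * ‖d‖ ^ 2))
      = γ * (1 - γ * σ) * (⟪d, e⟫_ℝ - σ * ‖d‖ ^ 2) := by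
    field_simp
  linarith

end Resolvent

section MoreauEnvelope

variable {g : Euc p → EReal} {γ : ℝ} {s x : Euc p}

theorem ProxObjMin.ne_top (hg : ProperFun g) (h : ProxObjMin g γ s x) : g x ≠ ⊤ := by
  obtain ⟨w, hw⟩ := hg.2
  intro htop
  have := h w
  rw [htop, EReal.top_add_of_ne_bot (EReal.coe_ne_bot _), top_le_iff] at this
  exact EReal.add_ne_top hw (EReal.coe_ne_top _) this

theorem ProxObjMin.coe_toReal (hg : ProperFun g) (h : ProxObjMin g γ s x) :
    ((g x).toReal : EReal) = g x :=
  EReal.coe_toReal (h.ne_top hg) (hg.1 x)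

theorem ProxObjMin.moreauR_eq (hg : ProperFun g) (h : ProxObjMin g γ s x) :
    moreauR g γ s = (g x).toReal + 1 / (2 * γ) * ‖x - s‖ ^ 2 := by
  have hmoreau : moreau g γ s = g x + ((1 / (2 * γ) * ‖x - s‖ ^ 2 : ℝ) : EReal) :=
    le_antisymm (iInf_le _ x) (le_iInf h)
  rw [moreauR, hmoreau, ← h.coe_toReal hg, ← EReal.coe_add, EReal.toReal_coe,
    EReal.toReal_coe]

theorem ProxObjMin.moreauR_le (hg : ProperFun g) (h : ProxObjMin g γ s x) {w : Euc p}
    (hw : g w ≠ ⊤) : moreauR g γ s ≤ (g w).toReal + 1 / (2 * γ) * ‖w - s‖ ^ 2 := by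
  rw [h.moreauR_eq hg, ← EReal.coe_le_coe_iff, EReal.coe_add, EReal.coe_add, h.coe_toReal hg,
    EReal.coe_toReal hw (hg.1 w)]
  exact h w

-- `γ⁻¹ (s - x)` is a subgradient of `g` at `x`: compare `x` with `x + t (w - x)` and let `t → 0⁺`.
theorem ProxObjMin.add_inner_le (hgc : ConvexFun g) (h : ProxObjMin g γ s x) {w : Euc p}
    {G W : ℝ} (hG : g x = G) (hW : g w = W) : G + γ⁻¹ * ⟪s - x, w - x⟫_ℝ ≤ W := by
  set A := W - G - γ⁻¹ * ⟪s - x, w - x⟫_ℝ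
  set B := 1 / (2 * γ) * ‖w - x‖ ^ 2
  have hstep : ∀ t ∈ Ioc (0 : ℝ) 1, 0 ≤ A + t * B := by
    rintro t ⟨ht0, ht1⟩
    have hconv := hgc w x t ht0.le ht1
    rw [hW, hG, ← EReal.coe_mul, ← EReal.coe_mul, ← EReal.coe_add] at hconv
    have hmin := (h (t • w + (1 - t) • x)).trans (add_le_add hconv le_rfl)
    rw [hG, ← EReal.coe_add, ← EReal.coe_add, EReal.coe_le_coe_iff] at hmin
    have hexp : t • w + (1 - t) • x - s = (x - s) + t • (w - x) := by module
    rw [hexp, norm_add_sq_real, inner_smul_right, norm_smul, mul_pow, Real.norm_eq_abs,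
      sq_abs, ← neg_sub s x, inner_neg_left] at hmin
    have hcross :
        1 / (2 * γ) * (2 * (t * -⟪s - x, w - x⟫_ℝ)) = -(t * (γ⁻¹ * ⟪s - x, w - x⟫_ℝ)) := by
      ring
    have : 0 ≤ t * (A + t * B) := by
      simp only [A, B]
      linarith
    exact nonneg_of_mul_nonneg_right this ht0
  have hlim : Tendsto (fun t => A + t * B) (𝓝[>] 0) (𝓝 A) :=
    ((continuous_const.add (continuous_id.mul continuous_const)).tendsto' 0 A
      (by simp [A])).mono_left nhdsWithin_le_nhds
  have := ge_of_tendsto hlim (eventually_of_mem (Ioc_mem_nhdsGT zero_lt_one) hstep)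
  linarith

theorem ProxObjMin.norm_sub_sq_le_inner (hg : ProperFun g) (hgc : ConvexFun g) (hγ : 0 < γ)
    {prox : Euc p → Euc p} (hprox : ∀ s, ProxObjMin g γ s (prox s)) (s s' : Euc p) :
    ‖prox s - prox s'‖ ^ 2 ≤ ⟪prox s - prox s', s - s'⟫_ℝ := by
  have h := (hprox s).add_inner_le hgc ((hprox s).coe_toReal hg).symm
    ((hprox s').coe_toReal hg).symm
  have h' := (hprox s').add_inner_le hgc ((hprox s').coe_toReal hg).symm
    ((hprox s).coe_toReal hg).symm
  have hsum : γ⁻¹ * (⟪prox s - prox s', s - s'⟫_ℝ - ‖prox s - prox s'‖ ^ 2) ≥ 0 := by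
    have hid : ⟪s - prox s, prox s' - prox s⟫_ℝ + ⟪s' - prox s', prox s - prox s'⟫_ℝ
        = -(⟪prox s - prox s', s - s'⟫_ℝ - ‖prox s - prox s'‖ ^ 2) := by
      rw [← real_inner_self_eq_norm_sq]
      simp only [inner_sub_left, inner_sub_right, real_inner_comm]
      ring
    rw [ge_iff_le, ← neg_nonpos, ← mul_neg, ← hid, mul_add]
    linarith
  exact sub_nonneg.1 (nonneg_of_mul_nonneg_right hsum (inv_pos.2 hγ))

theorem ProxObjMin.lipschitzWith_one (hg : ProperFun g) (hgc : ConvexFun g) (hγ : 0 < γ)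
    {prox : Euc p → Euc p} (hprox : ∀ s, ProxObjMin g γ s (prox s)) : LipschitzWith 1 prox :=
  LipschitzWith.of_dist_le_mul fun a b => by
    simpa [dist_eq_norm] using mul_norm_le_of_mul_norm_sq_le_inner (c := 1)
      (by simpa using ProxObjMin.norm_sub_sq_le_inner hg hgc hγ hprox a b)

theorem hasGradientAt_moreauR (hg : ProperFun g) {prox : Euc p → Euc p}
    (hprox : ∀ s, ProxObjMin g γ s (prox s)) (hcont : ContinuousAt prox s) :
    HasGradientAt (moreauR g γ) (γ⁻¹ • (s - prox s)) s :=
  hasGradientAt_of_forall_le_add_norm_sub_sq (F := fun w => (g w).toReal) hcont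
    (fun a => (hprox a).moreauR_eq hg) fun a b => (hprox b).moreauR_le hg ((hprox a).ne_top hg)

theorem properFun_coe (φ : Euc p → ℝ) : ProperFun (fun x => (φ x : EReal)) :=
  ⟨fun _ => EReal.coe_ne_bot _, ⟨0, EReal.coe_ne_top _⟩⟩

theorem NegProxObjMin.proxObjMin {f : Euc p → ℝ} (h : NegProxObjMin f γ s x) :
    ProxObjMin (fun x => ((-f x : ℝ) : EReal)) γ s x :=
  fun w => by simpa only [← EReal.coe_add, EReal.coe_le_coe_iff] using h w

theorem NegProxObjMin.eq_add_smul {f : Euc p → ℝ} {f' : Euc p → Euc p}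
    (hf : ∀ x, HasGradientAt f (f' x) x) (hγ : γ ≠ 0) (h : NegProxObjMin f γ s x) :
    x = s + γ • f' x := by
  have hgrad : HasGradientAt (fun w => -f w + 1 / (2 * γ) * ‖w - s‖ ^ 2)
      (-f' x + (1 / (2 * γ)) • ((2 : ℝ) • (x - s))) x :=
    (hf x).neg.add ((hasGradientAt_norm_sub_sq s x).const_mul _)
  have hmin : IsLocalMin (fun w => -f w + 1 / (2 * γ) * ‖w - s‖ ^ 2) x := Eventually.of_forall h
  have hzero := hmin.hasFDerivAt_eq_zero hgrad.hasFDerivAt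
  rw [LinearIsometryEquiv.map_eq_zero_iff, neg_add_eq_zero] at hzero
  have hγ1 : γ * (1 / (2 * γ)) * 2 = 1 := by field_simp
  rw [hzero, smul_smul, smul_smul, hγ1, one_smul, add_sub_cancel]

end MoreauEnvelope

theorem statement10_general
    (f : Euc p → ℝ) (f' : Euc p → Euc p)
    (hf : ∀ x, HasGradientAt f (f' x) x)
    (Lf : ℝ) (hlip : LipschitzWith (Real.toNNReal Lf) f')
    (σf σnf : ℝ) (hσf : |σf| ≤ Lf) (hσnf : |σnf| ≤ Lf)
    (hconvf : ConvexOn ℝ Set.univ (fun x => f x - σf/2 * ‖x‖^2))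
    (hconvnf : ConvexOn ℝ Set.univ (fun x => -f x - σnf/2 * ‖x‖^2))
    (g : Euc p → EReal)
    (hg_proper : ProperFun g) (hg_convex : ConvexFun g)
    (γ : ℝ) (hγ : 0 < γ) (hγL : γ * Lf < 1)
    (proxg : Euc p → Euc p) (hproxg : ∀ s, IsProxOf g γ s (proxg s))
    (proxnf : Euc p → Euc p)
    (hproxnf : ∀ s, NegProxObjMin f γ s (proxnf s) ∧
      ∀ w, NegProxObjMin f γ s w → w = proxnf s) :
    (∀ s : Euc p,
        HasGradientAt
          (fun s' => moreauR g γ s' - moreauR (fun x => ((-f x : ℝ) : EReal)) γ s')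
          (γ⁻¹ • (proxnf s - proxg s)) s) ∧
      (∀ s s' : Euc p,
        σf/(1 - γ * σf) * ‖s - s'‖^2 ≤
            ⟪γ⁻¹ • (proxnf s - proxg s) - γ⁻¹ • (proxnf s' - proxg s'), s - s'⟫_ℝ ∧
          ⟪γ⁻¹ • (proxnf s - proxg s) - γ⁻¹ • (proxnf s' - proxg s'), s - s'⟫_ℝ ≤
            1/(γ * (1 + γ * σnf)) * ‖s - s'‖^2) := by
  have hγσf : γ * σf < 1 := by nlinarith [le_abs_self σf]
  have hγσnf : 0 < 1 + γ * σnf := by nlinarith [neg_abs_le σnf]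
  have hsmooth : ConvexOn ℝ univ (fun x => γ⁻¹ / 2 * ‖x‖ ^ 2 - f x) := by
    refine hlip.convexOn_half_mul_norm_sq_sub hf ?_
    rw [Real.coe_toNNReal', max_le_iff, ← one_div, le_div_iff₀' hγ]
    exact ⟨hγL.le, by positivity⟩
  have hproxg' s : ProxObjMin g γ s (proxg s) := (hproxg s).1
  have hfix s : proxnf s = s + γ • f' (proxnf s) := (hproxnf s).1.eq_add_smul hf hγ.ne'
  refine ⟨fun s => ?_, fun s s' => ?_⟩
  · convert (hasGradientAt_moreauR hg_proper hproxg'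
      (ProxObjMin.lipschitzWith_one hg_proper hg_convex hγ hproxg').continuous.continuousAt).sub
      (hasGradientAt_moreauR (properFun_coe _) (fun s => (hproxnf s).1.proxObjMin)
        (lipschitzWith_of_eq_add_smul_gradient hf hγ.le hγσnf hconvnf hfix).continuous.continuousAt)
      using 1
    module
  · have hP := ProxObjMin.norm_sub_sq_le_inner hg_proper hg_convex hγ hproxg' s s'
    have hP0 : 0 ≤ ⟪proxg s - proxg s', s - s'⟫_ℝ := (sq_nonneg _).trans hP
    have hP1 : ⟪proxg s - proxg s', s - s'⟫_ℝ ≤ ‖s - s'‖ ^ 2 := by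
      simpa using inner_le_div_of_mul_norm_sq_le_inner one_pos (by simpa using hP)
    have hd0 := div_le_inner_of_eq_add_smul_gradient hf hγ hγσf hconvf hsmooth hfix s s'
    have hd1 := inner_le_div_of_eq_add_smul_gradient hf hγ.le hγσnf hconvnf hfix s s'
    rw [← smul_sub, real_inner_smul_left, sub_sub_sub_comm, inner_sub_left]
    constructor
    · calc σf / (1 - γ * σf) * ‖s - s'‖ ^ 2
          = γ⁻¹ * (‖s - s'‖ ^ 2 / (1 - γ * σf) - ‖s - s'‖ ^ 2) := by
            rw [div_sub' (sub_pos.2 hγσf).ne']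
            field_simp
            ring
        _ ≤ _ := by gcongr
    · calc γ⁻¹ * (⟪proxnf s - proxnf s', s - s'⟫_ℝ - ⟪proxg s - proxg s', s - s'⟫_ℝ)
          ≤ γ⁻¹ * (‖s - s'‖ ^ 2 / (1 + γ * σnf)) := by gcongr; linarith
        _ = 1 / (γ * (1 + γ * σnf)) * ‖s - s'‖ ^ 2 := by field_simp

/-- for `L_f`-smooth `f` with hypoconvexity moduli `σ_f, σ_{−f} ∈ [−L_f, L_f]`,
proper convex lsc `g` and `0 < γ < 1/L_f`, the DC envelope `φ_γ = g^γ − (−f)^γ` is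
differentiable with gradient `∇φ_γ = (1/γ)(prox_{−γf} − prox_{γg})` and for all `s, s′`
`(σ_f/(1 − γσ_f))‖s − s′‖² ≤ ⟨∇φ_γ(s) − ∇φ_γ(s′), s − s′⟩ ≤ (1/(γ(1 + γσ_{−f})))‖s − s′‖²`. -/
theorem statement10
    (f : Euc p → ℝ) (f' : Euc p → Euc p)
    (hf : ∀ x, HasGradientAt f (f' x) x)
    (Lf : ℝ) (hLf : 0 ≤ Lf) (hlip : LipschitzWith (Real.toNNReal Lf) f')
    (σf σnf : ℝ) (hσf : |σf| ≤ Lf) (hσnf : |σnf| ≤ Lf)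
    (hconvf : ConvexOn ℝ Set.univ (fun x => f x - σf/2 * ‖x‖^2))
    (hconvnf : ConvexOn ℝ Set.univ (fun x => -f x - σnf/2 * ‖x‖^2))
    (g : Euc p → EReal)
    (hg_proper : ProperFun g) (hg_convex : ConvexFun g) (hg_lsc : LowerSemicontinuous g)
    (γ : ℝ) (hγ : 0 < γ) (hγL : γ * Lf < 1)
    (proxg : Euc p → Euc p) (hproxg : ∀ s, IsProxOf g γ s (proxg s))
    (proxnf : Euc p → Euc p)
    (hproxnf : ∀ s, NegProxObjMin f γ s (proxnf s) ∧
      ∀ w, NegProxObjMin f γ s w → w = proxnf s) :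
    (∀ s : Euc p,
        HasGradientAt
          (fun s' => moreauR g γ s' - moreauR (fun x => ((-f x : ℝ) : EReal)) γ s')
          (γ⁻¹ • (proxnf s - proxg s)) s) ∧
      (∀ s s' : Euc p,
        σf/(1 - γ * σf) * ‖s - s'‖^2 ≤
            ⟪γ⁻¹ • (proxnf s - proxg s) - γ⁻¹ • (proxnf s' - proxg s'), s - s'⟫_ℝ ∧
          ⟪γ⁻¹ • (proxnf s - proxg s) - γ⁻¹ • (proxnf s' - proxg s'), s - s'⟫_ℝ ≤
            1/(γ * (1 + γ * σnf)) * ‖s - s'‖^2) :=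
  statement10_general f f' hf Lf hlip σf σnf hσf hσnf hconvf hconvnf g hg_proper hg_convex γ hγ hγL
    proxg hproxg proxnf hproxnf
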